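/- Let {|x⟩} be an orthonormal basis and suppose two probability distributions p and q satisfy ‖Σ_x p_x |x⟩⟨x| - Σ_x q_x |x⟩⟨x|‖₁ ≤ ε. Then the pure states |ψ⟩ = Σ_x √p_x |x⟩ and |φ⟩ = Σ_x √q_x |x⟩ satisfy ‖ |ψ⟩⟨ψ| - |φ⟩⟨φ| ‖₁ ≤ 2√ε. -/

import Mathlib

open scoped Matrix Kronecker ComplexOrder

noncomputable section

noncomputable def traceNorm {n : Type*} [Fintype n] [DecidableEq n] (A : Matrix n n ℂ) : ℝ :=
  (((Matrix.posSemidef_conjTranspose_mul_self A).isHermitian.eigenvectorUnitary.1 *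
    Matrix.diagonal (((↑) : ℝ → ℂ) ∘ (√·) ∘ (Matrix.posSemidef_conjTranspose_mul_self A).isHermitian.eigenvalues) *
    (star (Matrix.posSemidef_conjTranspose_mul_self A).isHermitian.eigenvectorUnitary :
      Matrix n n ℂ)).trace).re

noncomputable def vnEntropy {n : Type*} [Fintype n] [DecidableEq n] (ρ : Matrix n n ℂ) : ℝ :=
  if h : ρ.IsHermitian then -∑ i, (h.eigenvalues i * Real.log (h.eigenvalues i)) else 0

def ptraceL {a b : Type*} [Fintype a] (M : Matrix (a × b) (a × b) ℂ) : Matrix b b ℂ :=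
  Matrix.of fun i j => ∑ k : a, M (k, i) (k, j)

def ptraceR {a b : Type*} [Fintype b] (M : Matrix (a × b) (a × b) ℂ) : Matrix a a ℂ :=
  Matrix.of fun i j => ∑ k : b, M (i, k) (j, k)

def ptrace3M {a b c : Type*} [Fintype b] (M : Matrix (a × b × c) (a × b × c) ℂ) :
    Matrix (a × c) (a × c) ℂ :=
  Matrix.of fun i j => ∑ k : b, M (i.1, k, i.2) (j.1, k, j.2)

open scoped Classical in
noncomputable def msqrt {n : Type*} [Fintype n] [DecidableEq n] (A : Matrix n n ℂ) :
    Matrix n n ℂ :=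
  if h : A.PosSemidef then h.isHermitian.eigenvectorUnitary.1 *
    Matrix.diagonal (((↑) : ℝ → ℂ) ∘ (√·) ∘ h.isHermitian.eigenvalues) *
    (star h.isHermitian.eigenvectorUnitary : Matrix n n ℂ) else 0

noncomputable def fidelity {n : Type*} [Fintype n] [DecidableEq n] (ρ σ : Matrix n n ℂ) : ℝ :=
  (((msqrt (msqrt σ * ρ * msqrt σ)).trace).re) ^ 2

def outer {n : Type*} (v : n → ℂ) : Matrix n n ℂ :=
  Matrix.of fun i j => v i * (starRingEnd ℂ) (v j)

def krausApply {ι a b : Type*} [Fintype ι] [Fintype a]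
    (K : ι → Matrix b a ℂ) (ρ : Matrix a a ℂ) : Matrix b b ℂ :=
  ∑ i, K i * ρ * (K i)ᴴ


/-! For unit vectors `u`, `v` the difference `D = |u⟩⟨u| - |v⟩⟨v|` satisfies
`D D† D = s² D` with `s = √(1 - |⟨u, v⟩|²)`, so `s⁻¹ D†D` is the positive square root of `D†D`
and `‖D‖₁ = tr (D†D) / s = 2 s`. For `u = √p`, `v = √q` the overlap is the Bhattacharyya
coefficient `c = ∑ √(p q)`, and `1 - c² ≤ 2 (1 - c) = ∑ (√p - √q)² ≤ ∑ |p - q| ≤ ε`. -/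

open Matrix

section TraceNorm

variable {n : Type*} [Fintype n] [DecidableEq n]

open MatrixOrder in
theorem traceNorm_eq_re_trace_of_sq_eq {A B : Matrix n n ℂ} (hB : B.PosSemidef)
    (h : B ^ 2 = Aᴴ * A) : traceNorm A = B.trace.re := by
  unfold traceNorm
  have hc := (posSemidef_conjTranspose_mul_self A).isHermitian.cfc_eq Real.sqrt
  rw [IsHermitian.cfc, Unitary.conjStarAlgAut_apply] at hc
  have hsqrt : cfc Real.sqrt (Aᴴ * A) = B := by
    rw [← h, ← cfc_comp_pow (f := Real.sqrt) (n := 2) (ha := hB.isHermitian.isSelfAdjoint)]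
    conv_rhs => rw [← cfc_id' ℝ B hB.isHermitian.isSelfAdjoint]
    exact cfc_congr fun x hx => Real.sqrt_sq (spectrum_nonneg_of_nonneg hB.nonneg hx)
  rw [← hsqrt, hc]
  rfl

theorem traceNorm_zero : traceNorm (0 : Matrix n n ℂ) = 0 := by
  rw [traceNorm_eq_re_trace_of_sq_eq PosSemidef.zero (by simp)]
  simp

theorem traceNorm_diagonal (d : n → ℝ) :
    traceNorm (diagonal fun i => (d i : ℂ)) = ∑ i, |d i| := by
  have hB : (diagonal fun i => ((|d i| : ℝ) : ℂ)).PosSemidef :=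
    PosSemidef.diagonal fun i => Complex.zero_le_real.mpr (abs_nonneg _)
  rw [traceNorm_eq_re_trace_of_sq_eq hB]
  · simp [trace_diagonal, Complex.re_sum]
  · simp only [pow_two, diagonal_conjTranspose, diagonal_mul_diagonal]
    congr 1
    funext i
    simp only [Pi.star_apply, Complex.star_def, Complex.conj_ofReal, ← Complex.ofReal_mul,
      abs_mul_abs_self]

theorem traceNorm_eq_of_mul_conjTranspose_mul_eq_smul {A : Matrix n n ℂ} {s : ℝ} (hs : 0 < s)
    (h : A * Aᴴ * A = ((s ^ 2 : ℝ) : ℂ) • A) : traceNorm A = (Aᴴ * A).trace.re / s := by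
  have hB : (((s⁻¹ : ℝ) : ℂ) • (Aᴴ * A)).PosSemidef :=
    (posSemidef_conjTranspose_mul_self A).smul
      (Complex.zero_le_real.mpr (inv_nonneg.mpr hs.le))
  rw [traceNorm_eq_re_trace_of_sq_eq hB]
  · rw [trace_smul, smul_eq_mul, Complex.re_ofReal_mul, div_eq_inv_mul]
  · have hscalar : ((s⁻¹ : ℝ) : ℂ) * ((s⁻¹ : ℝ) : ℂ) * ((s ^ 2 : ℝ) : ℂ) = 1 := by
      push_cast
      field_simp
    rw [pow_two, smul_mul_smul, Matrix.mul_assoc, ← Matrix.mul_assoc A, h, Matrix.mul_smul,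
      smul_smul, hscalar, one_smul]

end TraceNorm

theorem Matrix.eq_zero_of_mul_conjTranspose_mul_eq_zero {m n R : Type*} [Fintype m] [Fintype n]
    [PartialOrder R] [NonUnitalRing R] [StarRing R] [StarOrderedRing R] [NoZeroDivisors R]
    {A : Matrix m n R} (h : A * Aᴴ * A = 0) : A = 0 :=
  conjTranspose_mul_self_eq_zero.mp ((self_mul_conjTranspose_mul_eq_zero A A).mp h)

theorem outer_eq_vecMulVec {n : Type*} (u : n → ℂ) : outer u = vecMulVec u (star u) := rfl

section PureStates

variable {n : Type*} [Fintype n]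

theorem outer_sub_outer_mul_conjTranspose_mul {u v : n → ℂ} (hu : star u ⬝ᵥ u = 1)
    (hv : star v ⬝ᵥ v = 1) :
    (outer u - outer v) * (outer u - outer v)ᴴ * (outer u - outer v) =
      ((1 - ‖star u ⬝ᵥ v‖ ^ 2 : ℝ) : ℂ) • (outer u - outer v) := by
  have hvu : star v ⬝ᵥ u = star (star u ⬝ᵥ v) := star_dotProduct _ _
  have hnorm : ((‖star u ⬝ᵥ v‖ ^ 2 : ℝ) : ℂ) = star u ⬝ᵥ v * star (star u ⬝ᵥ v) := by
    rw [Complex.star_def, Complex.mul_conj', Complex.ofReal_pow]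
  simp only [outer_eq_vecMulVec, conjTranspose_sub, conjTranspose_vecMulVec, star_star, sub_mul,
    mul_sub, vecMulVec_mul_vecMulVec, vecMulVec_smul, Matrix.smul_mul, hu, hv, hvu, one_smul,
    smul_sub]
  rw [Complex.ofReal_sub, Complex.ofReal_one, hnorm]
  module

theorem re_trace_conjTranspose_mul_outer_sub_outer {u v : n → ℂ} (hu : star u ⬝ᵥ u = 1)
    (hv : star v ⬝ᵥ v = 1) :
    ((outer u - outer v)ᴴ * (outer u - outer v)).trace.re = 2 * (1 - ‖star u ⬝ᵥ v‖ ^ 2) := by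
  have hvu : star v ⬝ᵥ u = star (star u ⬝ᵥ v) := star_dotProduct _ _
  simp only [outer_eq_vecMulVec, conjTranspose_sub, conjTranspose_vecMulVec, star_star, sub_mul,
    mul_sub, vecMulVec_mul_vecMulVec, vecMulVec_smul, trace_sub, trace_smul, trace_vecMulVec,
    smul_eq_mul]
  rw [dotProduct_comm u (star u), dotProduct_comm v (star v), dotProduct_comm v (star u),
    dotProduct_comm u (star v), hu, hv, hvu, mul_comm (star _), Complex.star_def, Complex.mul_conj']
  simp only [mul_one]
  norm_cast
  ring

variable [DecidableEq n]

theorem traceNorm_outer_sub_outer {u v : n → ℂ} (hu : star u ⬝ᵥ u = 1) (hv : star v ⬝ᵥ v = 1) :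
    traceNorm (outer u - outer v) = 2 * √(1 - ‖star u ⬝ᵥ v‖ ^ 2) := by
  have htrace := re_trace_conjTranspose_mul_outer_sub_outer hu hv
  have hnonneg : 0 ≤ 1 - ‖star u ⬝ᵥ v‖ ^ 2 := by
    have htrace_nonneg :=
      Complex.nonneg_iff.mp (posSemidef_conjTranspose_mul_self (outer u - outer v)).trace_nonneg
    linarith [htrace_nonneg.1]
  have hcube := outer_sub_outer_mul_conjTranspose_mul hu hv
  rw [← Real.sq_sqrt hnonneg] at hcube htrace
  rcases (Real.sqrt_nonneg (1 - ‖star u ⬝ᵥ v‖ ^ 2)).eq_or_lt with hzero | hpos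
  · rw [← hzero] at hcube ⊢
    have hD : outer u - outer v = 0 :=
      eq_zero_of_mul_conjTranspose_mul_eq_zero (by rw [hcube]; simp)
    rw [hD, traceNorm_zero, mul_zero]
  · rw [traceNorm_eq_of_mul_conjTranspose_mul_eq_smul hpos hcube, htrace]
    field_simp

end PureStates

theorem Real.sq_sqrt_sub_sqrt_le_abs_sub {a b : ℝ} (ha : 0 ≤ a) (hb : 0 ≤ b) :
    (√a - √b) ^ 2 ≤ |a - b| :=
  calc (√a - √b) ^ 2 = |√a - √b| * |√a - √b| := by rw [abs_mul_abs_self, sq]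
    _ ≤ |√a - √b| * (√a + √b) := by
      gcongr
      exact abs_sub_le_iff.mpr
        ⟨by linarith [Real.sqrt_nonneg b], by linarith [Real.sqrt_nonneg a]⟩
    _ = |a - b| := by
      rw [← abs_of_nonneg (by positivity : 0 ≤ √a + √b), ← abs_mul]
      congr 1
      linear_combination Real.mul_self_sqrt ha - Real.mul_self_sqrt hb

section Hellinger

variable {X : Type*} [Fintype X] {p q : X → ℝ}

theorem sum_sq_sqrt_sub_sqrt (hp : ∀ x, 0 ≤ p x) (hq : ∀ x, 0 ≤ q x) :
    ∑ x, (√(p x) - √(q x)) ^ 2 = ∑ x, p x + ∑ x, q x - 2 * ∑ x, √(p x) * √(q x) := by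
  rw [Finset.mul_sum, ← Finset.sum_add_distrib, ← Finset.sum_sub_distrib]
  refine Finset.sum_congr rfl fun x _ => ?_
  rw [sub_sq, Real.sq_sqrt (hp x), Real.sq_sqrt (hq x)]
  ring

theorem one_sub_sq_sum_sqrt_mul_sqrt_le (hp : ∀ x, 0 ≤ p x) (hp1 : ∑ x, p x = 1)
    (hq : ∀ x, 0 ≤ q x) (hq1 : ∑ x, q x = 1) :
    1 - (∑ x, √(p x) * √(q x)) ^ 2 ≤ ∑ x, |p x - q x| :=
  calc 1 - (∑ x, √(p x) * √(q x)) ^ 2 ≤ 2 - 2 * ∑ x, √(p x) * √(q x) := by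
        nlinarith [sq_nonneg (1 - ∑ x, √(p x) * √(q x))]
    _ = ∑ x, (√(p x) - √(q x)) ^ 2 := by rw [sum_sq_sqrt_sub_sqrt hp hq, hp1, hq1]; ring
    _ ≤ ∑ x, |p x - q x| :=
        Finset.sum_le_sum fun x _ => Real.sq_sqrt_sub_sqrt_le_abs_sub (hp x) (hq x)

theorem star_ofReal_sqrt_dotProduct :
    star (fun x => (√(p x) : ℂ)) ⬝ᵥ (fun x => (√(q x) : ℂ)) =
      ((∑ x, √(p x) * √(q x) : ℝ) : ℂ) := by
  simp [dotProduct]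

theorem star_ofReal_sqrt_dotProduct_self (hp : ∀ x, 0 ≤ p x) (hp1 : ∑ x, p x = 1) :
    star (fun x => (√(p x) : ℂ)) ⬝ᵥ (fun x => (√(p x) : ℂ)) = 1 := by
  simp [star_ofReal_sqrt_dotProduct, Real.mul_self_sqrt (hp _), hp1]

end Hellinger

theorem close_distributions_close_superpositions {X : Type*} [Fintype X] [DecidableEq X]
    (ε : ℝ) (p q : X → ℝ) (hp : ∀ x, 0 ≤ p x) (hp1 : ∑ x, p x = 1)
    (hq : ∀ x, 0 ≤ q x) (hq1 : ∑ x, q x = 1)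
    (hclose : traceNorm (Matrix.diagonal (fun x => (p x : ℂ))
        - Matrix.diagonal (fun x => (q x : ℂ))) ≤ ε) :
    traceNorm (outer (fun x => (Real.sqrt (p x) : ℂ)) - outer (fun x => (Real.sqrt (q x) : ℂ)))
      ≤ 2 * Real.sqrt ε := by
  have hdiag : diagonal (fun x => (p x : ℂ)) - diagonal (fun x => (q x : ℂ)) =
      diagonal fun x => ((p x - q x : ℝ) : ℂ) := by
    rw [diagonal_sub]; push_cast; rfl
  rw [traceNorm_outer_sub_outer (star_ofReal_sqrt_dotProduct_self hp hp1)
    (star_ofReal_sqrt_dotProduct_self hq hq1), star_ofReal_sqrt_dotProduct,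
    Complex.norm_real, Real.norm_eq_abs, sq_abs]
  rw [hdiag, traceNorm_diagonal] at hclose
  gcongr
  exact (one_sub_sq_sum_sqrt_mul_sqrt_le hp hp1 hq hq1).trans hclose
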